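/- If C = (1, c₂, c₃, c₄, c₅, 2c₅ − c₃) is canonical and the subsystem (1, c₂, c₃, c₄, c₅) is noncanonical, then C equals (1, c₂, 2c₂−1, c₄, c₂+c₄−1, 2c₄−1) or (1, c₂, 2c₂, c₄, c₂+c₄, 2c₄). -/

import Mathlib

/-!
Let `w` be the minimal counterexample of the subsystem `(1, c₂, c₃, c₄, c₅)`. Canonicity of the
whole system forces `c₆ ≤ w`, and the Kozen–Zaks bound gives `w < c₄ + c₅`. Testing canonicity
on the two-coin sums `c₄ + c₅`, `2c₄` and `2c₃` (greedy must pay each with at most two coins)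
leaves, besides the two claimed families, only systems in which greedy pays `w` with two
coins (impossible for a counterexample), systems with `2c₄ = c₃ + c₅`, and the systems
`(1, a, 2a - 1, 3a - 2, 5a - 4)`. In the last two, removing any coin above `c₂` from `w` saves only one
greedy coin, so no optimal representation of `w` uses such a coin; but some sub-sum of an
optimal representation lies in `[c₃, c₃ + c₂)`, and paying it greedily instead yields an optimal
representation of `w` that does use one.
-/

open Finset

/-- `x` is a representation of value `v` in the coin system `c 1, …, c n`. -/
def IsRepr (n : ℕ) (c : ℕ → ℕ) (v : ℕ) (x : ℕ → ℕ) : Prop :=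
  ∑ i ∈ Finset.Icc 1 n, c i * x i = v

/-- Minimum number of coins over all representations of `v`. -/
noncomputable def opt (n : ℕ) (c : ℕ → ℕ) (v : ℕ) : ℕ :=
  sInf {k | ∃ x : ℕ → ℕ, IsRepr n c v x ∧ ∑ i ∈ Finset.Icc 1 n, x i = k}

/-- Number of coins used by the greedy algorithm to pay `v`. -/
def grd (n : ℕ) (c : ℕ → ℕ) (v : ℕ) : ℕ :=
  if hv : v = 0 then 0
  else
    let m := ((Finset.Icc 1 n).filter (fun i => c i ≤ v)).sup c
    if hm : 0 < m then grd n c (v - m) + 1 else 0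
termination_by v
decreasing_by omega

/-- The system is canonical: greedy is optimal for every positive value. -/
def Canonical (n : ℕ) (c : ℕ → ℕ) : Prop :=
  ∀ v, 0 < v → opt n c v = grd n c v

/-- `w` is a counterexample to the system. -/
def IsCex (n : ℕ) (c : ℕ → ℕ) (w : ℕ) : Prop :=
  0 < w ∧ opt n c w < grd n c w

/-- `w` is the minimum counterexample to the system. -/
def MinCex (n : ℕ) (c : ℕ → ℕ) (w : ℕ) : Prop :=
  IsCex n c w ∧ ∀ u, IsCex n c u → w ≤ u

/-- A (currency) system: first coin is `1` and coins strictly increase. -/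
def IsSystem (n : ℕ) (c : ℕ → ℕ) : Prop :=
  c 1 = 1 ∧ StrictMonoOn c (Set.Icc 1 n)

def IsOptRepr (n : ℕ) (c : ℕ → ℕ) (v : ℕ) (x : ℕ → ℕ) : Prop :=
  IsRepr n c v x ∧ ∑ i ∈ Icc 1 n, x i = opt n c v

variable {n : ℕ} {c : ℕ → ℕ}

namespace IsSystem

lemma coin_lt (hs : IsSystem n c) {i j : ℕ} (hi : 1 ≤ i) (hij : i < j) (hj : j ≤ n) :
    c i < c j :=
  hs.2 ⟨hi, by omega⟩ ⟨by omega, hj⟩ hij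

lemma coin_le (hs : IsSystem n c) {i j : ℕ} (hi : i ∈ Icc 1 n) (hj : j ∈ Icc 1 n)
    (hij : i ≤ j) : c i ≤ c j :=
  hs.2.monotoneOn (mem_Icc.1 hi) (mem_Icc.1 hj) hij

lemma coin_pos (hs : IsSystem n c) {i : ℕ} (hi : i ∈ Icc 1 n) : 0 < c i := by
  have := hs.coin_le (mem_Icc.2 ⟨le_rfl, (mem_Icc.1 hi).1.trans (mem_Icc.1 hi).2⟩) hi
    (mem_Icc.1 hi).1
  rw [hs.1] at this
  omega

lemma mono (hs : IsSystem n c) {m : ℕ} (hm : m ≤ n) : IsSystem m c :=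
  ⟨hs.1, hs.2.mono (Set.Icc_subset_Icc_right hm)⟩

lemma chain_five (hs : IsSystem n c) (hn : 5 ≤ n) :
    c 1 = 1 ∧ c 1 < c 2 ∧ c 2 < c 3 ∧ c 3 < c 4 ∧ c 4 < c 5 :=
  ⟨hs.1, hs.coin_lt le_rfl (by norm_num) (by omega), hs.coin_lt (by norm_num) (by norm_num)
    (by omega), hs.coin_lt (by norm_num) (by norm_num) (by omega),
    hs.coin_lt (by norm_num) (by norm_num) hn⟩

end IsSystem

section Representations

variable {v u : ℕ} {x y : ℕ → ℕ}

lemma isRepr_single {j : ℕ} (hj : j ∈ Icc 1 n) (k : ℕ) :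
    IsRepr n c (c j * k) (Pi.single j k) := by
  simp [IsRepr, Pi.single_apply, hj]

lemma sum_single {j : ℕ} (hj : j ∈ Icc 1 n) (k : ℕ) :
    ∑ i ∈ Icc 1 n, Pi.single j k i = k := by
  simp [sum_pi_single', hj]

lemma single_one_le {j : ℕ} (h : x j ≠ 0) : Pi.single j 1 ≤ x := by
  intro i
  rcases eq_or_ne i j with rfl | hij
  · simpa using Nat.one_le_iff_ne_zero.2 h
  · simp [hij]

lemma sum_sub_single {j : ℕ} (hj : j ∈ Icc 1 n) (h : x j ≠ 0) :
    ∑ i ∈ Icc 1 n, (x - Pi.single j 1 : ℕ → ℕ) i = ∑ i ∈ Icc 1 n, x i - 1 := by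
  simp only [Pi.sub_apply]
  rw [sum_tsub_distrib _ fun i _ => single_one_le h i, sum_single hj]

lemma IsRepr.add (hx : IsRepr n c v x) (hy : IsRepr n c u y) : IsRepr n c (v + u) (x + y) := by
  simp only [IsRepr, Pi.add_apply, mul_add, sum_add_distrib] at *
  rw [hx, hy]

lemma IsRepr.sub (hx : IsRepr n c v x) (hy : IsRepr n c u y) (hyx : y ≤ x) :
    IsRepr n c (v - u) (x - y) := by
  unfold IsRepr at *
  simp only [Pi.sub_apply, Nat.mul_sub]
  rw [sum_tsub_distrib _ fun i _ => Nat.mul_le_mul_left _ (hyx i), hx, hy]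

lemma IsRepr.coin_le (hx : IsRepr n c v x) {j : ℕ} (hj : j ∈ Icc 1 n) (h : x j ≠ 0) :
    c j ≤ v :=
  calc c j ≤ c j * x j := Nat.le_mul_of_pos_right _ (Nat.pos_of_ne_zero h)
    _ ≤ v := hx ▸ single_le_sum (f := fun i => c i * x i) (fun _ _ => Nat.zero_le _) hj

lemma IsRepr.eq_zero (hx : IsRepr n c v x) (h : ∑ i ∈ Icc 1 n, x i = 0) : v = 0 := by
  rw [← hx]
  exact sum_eq_zero fun i hi => by rw [sum_eq_zero_iff.1 h i hi, mul_zero]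

lemma IsRepr.exists_coin_eq (hx : IsRepr n c v x) (hv : 0 < v)
    (h : ∑ i ∈ Icc 1 n, x i ≤ 1) : ∃ j ∈ Icc 1 n, c j = v := by
  obtain ⟨j, hj, hxj⟩ : ∃ j ∈ Icc 1 n, x j ≠ 0 := by
    by_contra! h0
    exact hv.ne' (hx.eq_zero (sum_eq_zero h0))
  have hrest := hx.sub (isRepr_single hj 1) (single_one_le hxj)
  have hcount : ∑ i ∈ Icc 1 n, (x - Pi.single j 1 : ℕ → ℕ) i = 0 := by
    rw [sum_sub_single hj hxj]
    omega
  have := hrest.eq_zero hcount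
  have := hx.coin_le hj hxj
  exact ⟨j, hj, by omega⟩

lemma exists_le_isRepr_mem_Ico {D t : ℕ} (hD : 0 < D) (hx : IsRepr n c v x)
    (hxD : ∀ i ∈ Icc 1 n, x i ≠ 0 → c i ≤ D) (htv : t ≤ v) :
    ∃ y ≤ x, ∃ s, IsRepr n c s y ∧ t ≤ s ∧ s < t + D := by
  obtain ⟨N, hN⟩ : ∃ N, ∑ i ∈ Icc 1 n, x i = N := ⟨_, rfl⟩
  induction N using Nat.strong_induction_on generalizing x v with
  | _ N ih =>
    by_cases hvt : v < t + D
    · exact ⟨x, le_rfl, v, hx, htv, hvt⟩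
    obtain ⟨j, hj, hxj⟩ : ∃ j ∈ Icc 1 n, x j ≠ 0 := by
      by_contra! h0
      have := hx.eq_zero (sum_eq_zero h0)
      omega
    have hcount : ∑ i ∈ Icc 1 n, (x - Pi.single j 1 : ℕ → ℕ) i = N - 1 := by
      rw [sum_sub_single hj hxj, hN]
    have hN0 : 0 < N := hN ▸ (Nat.pos_of_ne_zero hxj).trans_le
      (single_le_sum (f := x) (fun _ _ => Nat.zero_le _) hj)
    obtain ⟨y, hyx, s, hy⟩ := ih (N - 1) (by omega)
      (hx.sub (isRepr_single hj 1) (single_one_le hxj))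
      (fun i hi hi0 => hxD i hi fun h => hi0 (by simp [h]))
      (by have := hxD j hj hxj; omega) hcount
    exact ⟨y, hyx.trans tsub_le_self, s, hy⟩

end Representations

section Optimal

variable {v : ℕ} {x : ℕ → ℕ}

lemma opt_le (hx : IsRepr n c v x) : opt n c v ≤ ∑ i ∈ Icc 1 n, x i :=
  Nat.sInf_le ⟨x, hx, rfl⟩

lemma opt_zero : opt n c 0 = 0 :=
  Nat.eq_zero_of_le_zero <| (opt_le (x := 0) (by simp [IsRepr])).trans_eq (by simp)

lemma exists_isOptRepr (hs : IsSystem n c) (hn : 1 ≤ n) (v : ℕ) : ∃ x, IsOptRepr n c v x := by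
  have hones : IsRepr n c v (Pi.single 1 v) := by
    simpa [hs.1] using isRepr_single (c := c) (mem_Icc.2 ⟨le_rfl, hn⟩) v
  exact Nat.sInf_mem (s := {k | ∃ x : ℕ → ℕ, IsRepr n c v x ∧ ∑ i ∈ Icc 1 n, x i = k})
    ⟨_, _, hones, rfl⟩

lemma IsOptRepr.opt_sub_add_one_le (hx : IsOptRepr n c v x) {j : ℕ} (hj : j ∈ Icc 1 n)
    (h : x j ≠ 0) : opt n c (v - c j) + 1 ≤ opt n c v := by
  have hle := opt_le (hx.1.sub (isRepr_single hj 1) (single_one_le h))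
  rw [sum_sub_single hj h, hx.2, mul_one] at hle
  have := hx.2 ▸ single_le_sum (f := x) (fun _ _ => Nat.zero_le _) hj
  omega

lemma opt_add_le_two {i j : ℕ} (hi : i ∈ Icc 1 n) (hj : j ∈ Icc 1 n) :
    opt n c (c i + c j) ≤ 2 := by
  have := opt_le (by simpa using (isRepr_single (c := c) hi 1).add (isRepr_single hj 1))
  simpa only [Pi.add_apply, sum_add_distrib, sum_single hi, sum_single hj] using this

end Optimal

section Greedy

variable {v : ℕ}

lemma grd_zero : grd n c 0 = 0 := by
  rw [grd]; simp

lemma grd_eq_succ (hs : IsSystem n c) {k : ℕ} (hk : k ∈ Icc 1 n) (hkv : c k ≤ v)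
    (hmax : ∀ i ∈ Icc 1 n, c i ≤ v → c i ≤ c k) : grd n c v = grd n c (v - c k) + 1 := by
  have hsup : ((Icc 1 n).filter (fun i => c i ≤ v)).sup c = c k :=
    le_antisymm (Finset.sup_le fun i hi => hmax i (mem_filter.1 hi).1 (mem_filter.1 hi).2)
      (le_sup (mem_filter.2 ⟨hk, hkv⟩))
  have hck := hs.coin_pos hk
  rw [grd, dif_neg (by omega)]
  simp only [hsup, dif_pos hck]

lemma exists_greedy_coin (hs : IsSystem n c) (hn : 1 ≤ n) (hv : 0 < v) :
    ∃ k ∈ Icc 1 n, c k ≤ v ∧ ∀ i ∈ Icc 1 n, c i ≤ v → c i ≤ c k := by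
  have h1 : 1 ∈ (Icc 1 n).filter (fun i => c i ≤ v) := by
    rw [mem_filter, mem_Icc, hs.1]; omega
  obtain ⟨k, hk, hsup⟩ := exists_mem_eq_sup _ ⟨1, h1⟩ c
  rw [mem_filter] at hk
  exact ⟨k, hk.1, hk.2, fun i hi hiv => hsup ▸ le_sup (mem_filter.2 ⟨hi, hiv⟩)⟩

-- The index `l = k + 1` is a separate argument so that, for numerals, hypotheses mention `c 4`
-- rather than `c (3 + 1)`, which `omega` would treat as a different atom.
lemma grd_eq_succ_of_lt (hs : IsSystem n c) {k l : ℕ} (hkl : k + 1 = l) (hkv : c k ≤ v)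
    (hv : l ≤ n → v < c l) (hk : k ∈ Icc 1 n := by simp) :
    grd n c v = grd n c (v - c k) + 1 := by
  subst hkl
  refine grd_eq_succ hs hk hkv fun i hi hiv => hs.coin_le hi hk ?_
  by_contra! hki
  obtain ⟨hi1, hin⟩ := mem_Icc.1 hi
  have := hs.coin_le (i := k + 1) (mem_Icc.2 ⟨by omega, by omega⟩) hi hki
  have := hv (by omega)
  omega

lemma grd_coin (hs : IsSystem n c) {k : ℕ} (hk : k ∈ Icc 1 n) : grd n c (c k) = 1 := by
  rw [grd_eq_succ hs hk le_rfl fun _ _ h => h, Nat.sub_self, grd_zero]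

lemma exists_repr_grd (hs : IsSystem n c) (hn : 1 ≤ n) (v : ℕ) :
    ∃ x, IsRepr n c v x ∧ ∑ i ∈ Icc 1 n, x i = grd n c v := by
  induction v using Nat.strong_induction_on with
  | _ v ih =>
    rcases Nat.eq_zero_or_pos v with rfl | hv
    · exact ⟨0, by simp [IsRepr], by simp [grd_zero]⟩
    obtain ⟨k, hk, hkv, hmax⟩ := exists_greedy_coin hs hn hv
    obtain ⟨x, hx, hxg⟩ := ih (v - c k) (by have := hs.coin_pos hk; omega)
    refine ⟨x + Pi.single k 1,
      by simpa [Nat.sub_add_cancel hkv] using hx.add (isRepr_single hk 1), ?_⟩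
    simp only [Pi.add_apply, sum_add_distrib, hxg, sum_single hk, grd_eq_succ hs hk hkv hmax]

lemma opt_le_grd (hs : IsSystem n c) (hn : 1 ≤ n) (v : ℕ) : opt n c v ≤ grd n c v := by
  obtain ⟨x, hx, hxg⟩ := exists_repr_grd hs hn v
  exact hxg ▸ opt_le hx

lemma exists_coin_eq_of_grd_le_one (hs : IsSystem n c) (hn : 1 ≤ n) (hv : 0 < v)
    (h : grd n c v ≤ 1) : ∃ j ∈ Icc 1 n, c j = v := by
  obtain ⟨x, hx, hxg⟩ := exists_repr_grd hs hn v
  exact hx.exists_coin_eq hv (hxg ▸ h)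

end Greedy

lemma Canonical.add_eq_or (hs : IsSystem n c) (hC : Canonical n c) {i j k l : ℕ}
    (hi : i ∈ Icc 1 n) (hj : j ∈ Icc 1 n) (hk : k ∈ Icc 1 n) (hkl : k + 1 = l)
    (hkv : c k ≤ c i + c j) (hv : l ≤ n → c i + c j < c l) :
    c i + c j = c k ∨ ∃ m ∈ Icc 1 n, c i + c j = c k + c m := by
  have hn : 1 ≤ n := (mem_Icc.1 hi).1.trans (mem_Icc.1 hi).2
  have hstep := grd_eq_succ_of_lt hs hkl hkv hv hk
  have hopt := hC (c i + c j) (by have := hs.coin_pos hi; omega)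
  have htwo := opt_add_le_two (c := c) hi hj
  rcases Nat.eq_zero_or_pos (c i + c j - c k) with h0 | hpos
  · left; omega
  · obtain ⟨m, hm, hcm⟩ := exists_coin_eq_of_grd_le_one hs hn hpos (by omega)
    exact Or.inr ⟨m, hm, by omega⟩

lemma Canonical.add_eq_six (hs : IsSystem 6 c) (hC : Canonical 6 c) (i j k l : ℕ)
    (hkl : k + 1 = l) (hkv : c k ≤ c i + c j) (hv : l ≤ 6 → c i + c j < c l)
    (hi : i ∈ Icc 1 6 := by simp) (hj : j ∈ Icc 1 6 := by simp)
    (hk : k ∈ Icc 1 6 := by simp) :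
    c i + c j = c k ∨ c i + c j = c k + c 1 ∨ c i + c j = c k + c 2 ∨
      c i + c j = c k + c 3 ∨ c i + c j = c k + c 4 ∨ c i + c j = c k + c 5 ∨
      c i + c j = c k + c 6 := by
  rcases hC.add_eq_or hs hi hj hk hkl hkv hv with h | ⟨m, hm, h⟩
  · exact Or.inl h
  · obtain ⟨hm1, hm6⟩ := mem_Icc.1 hm
    interval_cases m <;> simp [h]

section Restriction

variable {v w : ℕ}

lemma grd_succ_of_lt (hs : IsSystem (n + 1) c) (hv : v < c (n + 1)) :
    grd (n + 1) c v = grd n c v := by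
  induction v using Nat.strong_induction_on with
  | _ v ih =>
    rcases Nat.eq_zero_or_pos v with rfl | hv0
    · rw [grd_zero, grd_zero]
    obtain ⟨k, hk, hkv, hmax⟩ := exists_greedy_coin hs (by omega) hv0
    have hkn : k ∈ Icc 1 n := by
      obtain ⟨hk1, hkn⟩ := mem_Icc.1 hk
      refine mem_Icc.2 ⟨hk1, ?_⟩
      by_contra!
      obtain rfl : k = n + 1 := by omega
      omega
    have hck := hs.coin_pos hk
    rw [grd_eq_succ hs hk hkv hmax, grd_eq_succ (hs.mono n.le_succ) hkn hkv
      fun i hi => hmax i (Icc_subset_Icc_right n.le_succ hi), ih _ (by omega) (by omega)]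

lemma opt_succ_le (hs : IsSystem n c) (hn : 1 ≤ n) (v : ℕ) : opt (n + 1) c v ≤ opt n c v := by
  obtain ⟨x, hx, hxopt⟩ := exists_isOptRepr hs hn v
  have hext : ∀ g : ℕ → ℕ → ℕ, (∀ i, g i 0 = 0) →
      ∑ i ∈ Icc 1 (n + 1), g i (Function.update x (n + 1) 0 i) =
        ∑ i ∈ Icc 1 n, g i (x i) := by
    intro g hg
    rw [sum_Icc_succ_top (by omega), Function.update_self, hg, add_zero]
    exact sum_congr rfl fun i hi => by
      rw [Function.update_of_ne (by simp only [mem_Icc] at hi; omega)]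
  have := opt_le (n := n + 1) (c := c) (v := v) (x := Function.update x (n + 1) 0)
    (by rw [IsRepr, hext (fun i a => c i * a) fun _ => mul_zero _]; exact hx)
  rwa [hext (fun _ a => a) fun _ => rfl, hxopt] at this

lemma IsCex.coin_succ_le (hw : IsCex n c w) (hs : IsSystem (n + 1) c) (hn : 1 ≤ n)
    (hC : Canonical (n + 1) c) : c (n + 1) ≤ w := by
  by_contra! h
  have := grd_succ_of_lt hs h
  have := hC w hw.1
  have := opt_succ_le (hs.mono n.le_succ) hn w
  have := hw.2
  omega

end Restriction

section MinimalCounterexample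

variable {w : ℕ}

lemma IsCex.two_lt_grd (hw : IsCex n c w) (hs : IsSystem n c) (hn : 1 ≤ n) : 2 < grd n c w := by
  by_contra! h
  obtain ⟨x, hx⟩ := exists_isOptRepr hs hn w
  have hlt := hw.2
  obtain ⟨j, hj, rfl⟩ := hx.1.exists_coin_eq hw.1 (by rw [hx.2]; omega)
  rw [grd_coin hs hj] at hlt
  exact hw.1.ne' (hx.1.eq_zero (by rw [hx.2]; omega))

lemma exists_minCex (hs : IsSystem n c) (hn : 1 ≤ n) (h : ¬ Canonical n c) :
    ∃ w, MinCex n c w := by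
  have hne : ∃ v, IsCex n c v := by
    simp only [Canonical, not_forall] at h
    obtain ⟨v, hv, hne⟩ := h
    exact ⟨v, hv, lt_of_le_of_ne (opt_le_grd hs hn v) hne⟩
  exact ⟨sInf {u | IsCex n c u}, Nat.sInf_mem hne, fun u hu => Nat.sInf_le hu⟩

lemma MinCex.opt_eq_grd (hw : MinCex n c w) (hs : IsSystem n c) (hn : 1 ≤ n) {u : ℕ}
    (hu : u < w) : opt n c u = grd n c u := by
  rcases Nat.eq_zero_or_pos u with rfl | hu0
  · rw [opt_zero, grd_zero]
  · refine le_antisymm (opt_le_grd hs hn u) (not_lt.1 fun h => ?_)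
    have := hw.2 u ⟨hu0, h⟩
    omega

lemma MinCex.eq_zero_of_isOptRepr (hw : MinCex n c w) (hs : IsSystem n c) (hn : 1 ≤ n)
    {j : ℕ} (hj : j ∈ Icc 1 n) (hgrd : grd n c w ≤ grd n c (w - c j) + 1) {x : ℕ → ℕ}
    (hx : IsOptRepr n c w x) : x j = 0 := by
  by_contra h
  have h1 := hx.opt_sub_add_one_le hj h
  have := hs.coin_pos hj
  have h2 := hw.opt_eq_grd hs hn (u := w - c j) (by have := hx.1.coin_le hj h; omega)
  have := hw.1.2
  omega

lemma MinCex.exists_isOptRepr_ne_zero (hw : MinCex n c w) (hs : IsSystem n c) (hn : 1 ≤ n)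
    {M y : ℕ → ℕ} {s : ℕ} (hM : IsOptRepr n c w M) (hy : IsRepr n c s y) (hyM : y ≤ M)
    (hsw : s < w) {j : ℕ} (hj : j ∈ Icc 1 n) (hjs : c j ≤ s)
    (hgrd : grd n c s = grd n c (s - c j) + 1) : ∃ z, IsOptRepr n c w z ∧ z j ≠ 0 := by
  obtain ⟨g, hg, hgc⟩ := exists_repr_grd hs hn (s - c j)
  -- trade the part `y` of `M` for the greedy representation of its value `s`
  have hz : IsRepr n c w (M - y + (Pi.single j 1 + g)) := by
    convert (hM.1.sub hy hyM).add ((isRepr_single hj 1).add hg) using 1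
    omega
  have hcount : ∑ i ∈ Icc 1 n, (M - y + (Pi.single j 1 + g) : ℕ → ℕ) i
      = ∑ i ∈ Icc 1 n, M i - ∑ i ∈ Icc 1 n, y i + grd n c s := by
    simp only [Pi.add_apply, Pi.sub_apply, sum_add_distrib]
    rw [sum_tsub_distrib _ fun i _ => hyM i, sum_single hj, hgc, hgrd]
    omega
  have hys : ∑ i ∈ Icc 1 n, y i ≤ ∑ i ∈ Icc 1 n, M i := sum_le_sum fun i _ => hyM i
  have hy_opt := (hw.opt_eq_grd hs hn hsw).symm.trans_le (opt_le hy)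
  have := opt_le hz
  refine ⟨_, ⟨hz, by rw [← hM.2] at this ⊢; omega⟩, by simp⟩

/-- Otherwise removing any coin above `c m` from `w` would save greedy only one coin, so no
optimal representation of `w` would use such a coin; but a sub-sum of one, lying in
`[c (m + 1), c (m + 1) + c m)`, could be re-paid greedily starting with a coin above `c m`. -/
theorem MinCex.exists_grd_sub_add_one_lt {m : ℕ} (hw : MinCex n c w) (hs : IsSystem n c)
    (hm : 1 ≤ m) (hmn : m < n) (hwm : c (m + 1) + c m ≤ w) :
    ∃ j ∈ Icc (m + 1) n, c j ≤ w ∧ grd n c (w - c j) + 1 < grd n c w := by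
  have hn : 1 ≤ n := by omega
  have hmI : m ∈ Icc 1 n := mem_Icc.2 ⟨hm, hmn.le⟩
  have hm1 : m + 1 ∈ Icc 1 n := mem_Icc.2 ⟨by omega, hmn⟩
  by_contra! hbig
  have hsmall : ∀ z, IsOptRepr n c w z → ∀ i ∈ Icc 1 n, z i ≠ 0 → i ≤ m := by
    intro z hz i hi hzi
    by_contra! him
    exact hzi (hw.eq_zero_of_isOptRepr hs hn hi
      (hbig i (mem_Icc.2 ⟨him, (mem_Icc.1 hi).2⟩) (hz.1.coin_le hi hzi)) hz)
  obtain ⟨M, hM⟩ := exists_isOptRepr hs hn w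
  obtain ⟨y, hyM, s, hy, hts, hst⟩ := exists_le_isRepr_mem_Ico (hs.coin_pos hmI) hM.1
    (fun i hi hMi => hs.coin_le hi hmI (hsmall M hM i hi hMi)) (t := c (m + 1)) (by omega)
  have hcm := hs.coin_lt hm (by omega : m < m + 1) hmn
  obtain ⟨k, hk, hks, hmax⟩ := exists_greedy_coin hs hn (v := s) (by omega)
  have hmk := hmax (m + 1) hm1 hts
  obtain ⟨z, hz, hzk⟩ := hw.exists_isOptRepr_ne_zero hs hn hM hy hyM (by omega) hk hks
    (grd_eq_succ hs hk hks hmax)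
  have := hs.coin_le hk hmI (hsmall z hz k hk hzk)
  omega

/-- The Kozen–Zaks bound. -/
theorem MinCex.lt_add {m : ℕ} (hw : MinCex (m + 1) c w) (hs : IsSystem (m + 1) c)
    (hm : 1 ≤ m) : w < c m + c (m + 1) := by
  by_contra! h
  obtain ⟨j, hj, hjw, hlt⟩ := hw.exists_grd_sub_add_one_lt hs hm (by omega) (by omega)
  obtain rfl : j = m + 1 := by simp only [mem_Icc] at hj; omega
  have := grd_eq_succ_of_lt hs rfl hjw (by omega) (mem_Icc.2 ⟨by omega, le_rfl⟩)
  omega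

end MinimalCounterexample

section FiveCoins

variable {w : ℕ}

theorem MinCex.grd_sub_four_lt_grd_sub_five (hw : MinCex 5 c w) (hs : IsSystem 5 c)
    (h35 : c 3 + c 5 ≤ w) (hw45 : w < c 4 + c 5) : grd 5 c (w - c 4) < grd 5 c (w - c 5) := by
  obtain ⟨h1, h12, h23, h34, h45⟩ := hs.chain_five le_rfl
  obtain ⟨j, hj, hjw, hlt⟩ := hw.exists_grd_sub_add_one_lt hs (m := 2) (by norm_num)
    (by norm_num) (show c 3 + c 2 ≤ w by omega)
  have hw5 := grd_eq_succ_of_lt hs (k := 5) (l := 6) (v := w) rfl (by omega) (by omega)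
  have hw53 := grd_eq_succ_of_lt hs (k := 3) (l := 4) (v := w - c 5) rfl (by omega) (by omega)
  have hw35 := grd_eq_succ_of_lt hs (k := 5) (l := 6) (v := w - c 3) rfl (by omega) (by omega)
  rw [Nat.sub_right_comm] at hw35
  -- removing `c 3` or `c 5` from `w` saves exactly one greedy coin, so the coin found is `c 4`
  obtain ⟨hj3, hj5⟩ := mem_Icc.1 hj
  interval_cases j <;> omega

theorem not_minCex_of_two_mul_four_eq (hs : IsSystem 5 c) (h4 : 2 * c 4 = c 3 + c 5)
    (h35 : c 3 + c 5 ≤ w) (hw45 : w < c 4 + c 5) : ¬ MinCex 5 c w := by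
  intro hw
  obtain ⟨h1, h12, h23, h34, h45⟩ := hs.chain_five le_rfl
  have := hw.grd_sub_four_lt_grd_sub_five hs h35 hw45
  rw [grd_eq_succ_of_lt hs (k := 4) (l := 5) (v := w - c 4) rfl (by omega) (by omega),
    grd_eq_succ_of_lt hs (k := 3) (l := 4) (v := w - c 5) rfl (by omega) (by omega),
    show w - c 4 - c 4 = w - c 5 - c 3 by omega] at this
  omega

/-- The system is `(1, a, 2a - 1, 3a - 2, 5a - 4)` and `w = 8a - 7`. -/
theorem not_minCex_of_add_one_eq (hs : IsSystem 5 c) (h2 : 3 ≤ c 2) (h3 : c 3 + 1 = 2 * c 2)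
    (h4 : c 4 + 1 = c 2 + c 3) (h5 : c 5 + 1 = c 3 + c 4) (hw : w + 1 = c 4 + c 5) :
    ¬ MinCex 5 c w := by
  intro hmin
  obtain ⟨h1, h12, h23, h34, h45⟩ := hs.chain_five le_rfl
  have := hmin.grd_sub_four_lt_grd_sub_five hs (by omega) (by omega)
  rw [grd_eq_succ_of_lt hs (k := 4) (l := 5) (v := w - c 4) rfl (by omega) (by omega),
    grd_eq_succ_of_lt hs (k := 2) (l := 3) (v := w - c 4 - c 4) rfl (by omega) (by omega),
    grd_eq_succ_of_lt hs (k := 3) (l := 4) (v := w - c 5) rfl (by omega) (by omega),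
    grd_eq_succ_of_lt hs (k := 1) (l := 2) (v := w - c 5 - c 3) rfl (by omega) (by omega),
    show w - c 4 - c 4 - c 2 = w - c 5 - c 3 - c 1 by omega] at this
  omega

end FiveCoins

section SixCoins

variable {w : ℕ}

theorem Canonical.not_minCex_of_three_add_four_eq_succ (hC : Canonical 6 c)
    (hs : IsSystem 6 c) (h6 : c 6 + c 3 = 2 * c 5) (hI : c 3 + c 4 = c 5 + 1)
    (hw6 : c 6 ≤ w) (hw45 : w < c 4 + c 5) : ¬ MinCex 5 c w := by
  intro hw
  have hs5 : IsSystem 5 c := hs.mono (by norm_num)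
  obtain ⟨h1, h12, h23, h34, h45⟩ := hs.chain_five (by norm_num)
  have hsum44 := hC.add_eq_six hs 4 4 5 6 rfl (by omega) (by omega)
  rcases (by omega : c 4 + 1 = 2 * c 3 ∨ c 4 + 1 = c 2 + c 3) with h4 | h4
  · exact not_minCex_of_two_mul_four_eq hs5 (by omega) (by omega) hw45 hw
  rcases (by omega : c 2 = 2 ∨ 3 ≤ c 2) with h2 | h2
  · -- greedy pays `w = c 3 + c 5` with two coins
    have := hw.1.two_lt_grd hs5 (by norm_num)
    rw [grd_eq_succ_of_lt hs5 (k := 5) (l := 6) rfl (by omega) (by omega),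
      show w - c 5 = c 3 by omega, grd_coin hs5 (by simp)] at this
    omega
  · have hsum33 := hC.add_eq_six hs 3 3 4 5 rfl (by omega) (by omega)
    exact not_minCex_of_add_one_eq hs5 h2 (by omega) h4 (by omega) (by omega) hw

theorem Canonical.not_minCex_of_three_add_four_eq_add_two (hC : Canonical 6 c)
    (hs : IsSystem 6 c) (h6 : c 6 + c 3 = 2 * c 5) (hII : c 3 + c 4 = c 5 + c 2)
    (h32 : 2 * c 2 < c 3) (hw6 : c 6 ≤ w) (hw45 : w < c 4 + c 5) : ¬ MinCex 5 c w := by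
  obtain ⟨h1, h12, h23, h34, h45⟩ := hs.chain_five (by norm_num)
  have hsum44 := hC.add_eq_six hs 4 4 5 6 rfl (by omega) (by omega)
  exact not_minCex_of_two_mul_four_eq (hs.mono (by norm_num)) (by omega) (by omega) hw45

end SixCoins

theorem case_two_c5_sub_c3 (c : ℕ → ℕ) (hsys : IsSystem 6 c)
    (h6 : c 6 = 2 * c 5 - c 3)
    (hC : Canonical 6 c) (hC' : ¬ Canonical 5 c) :
    (c 3 = 2 * c 2 - 1 ∧ c 5 = c 2 + c 4 - 1 ∧ c 6 = 2 * c 4 - 1) ∨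
      (c 3 = 2 * c 2 ∧ c 5 = c 2 + c 4 ∧ c 6 = 2 * c 4) := by
  have hs5 : IsSystem 5 c := hsys.mono (by norm_num)
  obtain ⟨h1, h12, h23, h34, h45⟩ := hsys.chain_five (by norm_num)
  have h6' : c 6 + c 3 = 2 * c 5 := by omega
  obtain ⟨w, hw⟩ := exists_minCex hs5 (by norm_num) hC'
  have hw6 : c 6 ≤ w := hw.1.coin_succ_le hsys (by norm_num) hC
  have hw45 : w < c 4 + c 5 := hw.lt_add hs5 (by norm_num)
  have hsum45 := hC.add_eq_six hsys 4 5 6 7 rfl (by omega) (by omega)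
  rcases (by omega : c 3 + c 4 = c 5 + 1 ∨ c 3 + c 4 = c 5 + c 2) with hI | hII
  · exact (hC.not_minCex_of_three_add_four_eq_succ hsys h6' hI hw6 hw45 hw).elim
  rcases le_or_gt (c 3) (2 * c 2) with h32 | h32
  · have hsum44 := hC.add_eq_six hsys 4 4 6 7 rfl (by omega) (by omega)
    omega
  · exact (hC.not_minCex_of_three_add_four_eq_add_two hsys h6' hII h32 hw6 hw45 hw).elim
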